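/- Hoffman–Wielandt-type bound for symmetric matrices: for real symmetric n×n matrices A and B, ‖λ(A) − λ(B)‖₂ ≤ ‖A − B‖_F, where λ(·) denotes the ascending eigenvalue vector. -/

import Mathlib

/-! Diagonalize `A = U Λ Uᵀ` and `B = V M Vᵀ`. Then `tr (A B) = ∑ᵢⱼ λᵢ μⱼ Wᵢⱼ²` with `W = Uᵀ V`
orthogonal, so `(Wᵢⱼ²)` is doubly stochastic; by Birkhoff's theorem the linear function
`S ↦ ∑ᵢⱼ λᵢ μⱼ Sᵢⱼ` is maximized at a permutation matrix, and by the rearrangement inequality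
every permutation gives at most `∑ᵢ λ↑ᵢ μ↑ᵢ`. Expanding
`‖A - B‖_F² = tr A² + tr B² - 2 tr (A B)` and `‖λ↑(A) - λ↑(B)‖² = ∑ λᵢ² + ∑ μᵢ² - 2 ∑ λ↑ᵢ μ↑ᵢ`
finishes the proof. -/

open Matrix

noncomputable def frobNorm {n : ℕ} (M : Matrix (Fin n) (Fin n) ℝ) : ℝ :=
  Real.sqrt (∑ i, ∑ j, (M i j) ^ 2)

noncomputable def l2norm {n : ℕ} (v : Fin n → ℝ) : ℝ :=
  Real.sqrt (∑ i, (v i) ^ 2)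

noncomputable def lap {m : Type*} [Fintype m] [DecidableEq m] (M : Matrix m m ℝ) :
    Matrix m m ℝ :=
  Matrix.diagonal (fun i => ∑ j, M i j) - M

noncomputable def eigsAsc {n : ℕ} {A : Matrix (Fin n) (Fin n) ℝ} (hA : A.IsHermitian) :
    Fin n → ℝ :=
  fun i => hA.eigenvalues (Tuple.sort hA.eigenvalues i)

open Finset

section

variable {m : Type*} [Fintype m] [DecidableEq m]

lemma Matrix.trace_diagonal_mul_mul_diagonal_mul_star (a b : m → ℝ) (W : Matrix m m ℝ) :
    trace (diagonal a * W * diagonal b * star W) = ∑ i, ∑ j, a i * b j * W i j ^ 2 := by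
  have hX : ∀ i j, (diagonal a * W * diagonal b) i j = a i * W i j * b j := fun i j => by
    rw [mul_diagonal, diagonal_mul]
  simp only [trace, diag_apply, mul_apply, hX, star_apply, star_trivial]
  exact sum_congr rfl fun i _ => sum_congr rfl fun j _ => by ring

lemma Matrix.IsHermitian.trace_mul_eq_sum_eigenvalues {A B : Matrix m m ℝ} (hA : A.IsHermitian)
    (hB : B.IsHermitian) :
    trace (A * B) = ∑ i, ∑ j, hA.eigenvalues i * hB.eigenvalues j *
      (star (hA.eigenvectorUnitary : Matrix m m ℝ) * hB.eigenvectorUnitary) i j ^ 2 := by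
  conv_lhs => rw [hA.spectral_theorem, hB.spectral_theorem]
  rw [← trace_diagonal_mul_mul_diagonal_mul_star, star_mul, star_star]
  simp only [Unitary.conjStarAlgAut_apply, RCLike.ofReal_real_eq_id, Function.id_comp, mul_assoc]
  rw [trace_mul_comm (hA.eigenvectorUnitary : Matrix m m ℝ)]
  simp only [mul_assoc]

lemma Matrix.IsHermitian.trace_mul_self_eq_sum_eigenvalues_sq {A : Matrix m m ℝ}
    (hA : A.IsHermitian) : trace (A * A) = ∑ i, hA.eigenvalues i ^ 2 := by
  rw [hA.trace_mul_eq_sum_eigenvalues hA, Unitary.coe_star_mul_self]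
  exact sum_congr rfl fun i _ => by simp [one_apply, sq]

omit [DecidableEq m] in
lemma Matrix.IsHermitian.sum_sq_entries_eq_trace_mul_self {M : Matrix m m ℝ}
    (hM : M.IsHermitian) : ∑ i, ∑ j, M i j ^ 2 = trace (M * M) := by
  simp only [trace, diag_apply, mul_apply]
  exact sum_congr rfl fun i _ => sum_congr rfl fun j _ => by
    rw [sq, ← hM.apply i j, star_trivial]

lemma Matrix.of_sq_mem_doublyStochastic {W : Matrix m m ℝ} (hW : W ∈ unitaryGroup m ℝ) :
    of (fun i j => W i j ^ 2) ∈ doublyStochastic ℝ m := by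
  have row (i : m) : ∑ j, W i j ^ 2 = 1 := by
    simpa [mul_apply, sq] using congrFun₂ (mem_unitaryGroup_iff.mp hW) i i
  have col (j : m) : ∑ i, W i j ^ 2 = 1 := by
    simpa [mul_apply, sq] using congrFun₂ (mem_unitaryGroup_iff'.mp hW) j j
  exact mem_doublyStochastic_iff_sum.mpr ⟨fun i j => sq_nonneg _, row, col⟩

lemma sum_mul_mul_le_of_mem_doublyStochastic (a b : m → ℝ) {c : ℝ}
    (hc : ∀ σ : Equiv.Perm m, ∑ i, a i * b (σ i) ≤ c) {S : Matrix m m ℝ}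
    (hS : S ∈ doublyStochastic ℝ m) : ∑ i, ∑ j, a i * b j * S i j ≤ c := by
  have hlin : IsLinearMap ℝ fun S : Matrix m m ℝ => ∑ i, ∑ j, a i * b j * S i j := by
    constructor
    · intro S T
      simp only [Matrix.add_apply, mul_add, sum_add_distrib]
    · intro r S
      simp only [Matrix.smul_apply, smul_eq_mul, mul_sum]
      exact sum_congr rfl fun i _ => sum_congr rfl fun j _ => by ring
  rw [← SetLike.mem_coe, doublyStochastic_eq_convexHull_permMatrix] at hS
  refine convexHull_min ?_ (convex_halfSpace_le hlin c) hS
  rintro _ ⟨σ, rfl⟩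
  simpa [Equiv.Perm.permMatrix, PEquiv.toMatrix_apply, mul_ite] using hc σ

end

lemma sum_mul_comp_perm_le_sum_mul_sort {n : ℕ} (a b : Fin n → ℝ) (σ : Equiv.Perm (Fin n)) :
    ∑ i, a i * b (σ i) ≤ ∑ i, a (Tuple.sort a i) * b (Tuple.sort b i) := by
  have hmono : Monovary (a ∘ Tuple.sort a) (b ∘ Tuple.sort b) :=
    (Tuple.monotone_sort a).monovary (Tuple.monotone_sort b)
  rw [← Equiv.sum_comp (Tuple.sort a)]
  simpa using hmono.sum_mul_comp_perm_le_sum_mul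
    (σ := ((Tuple.sort a).trans σ).trans (Tuple.sort b).symm)

section EigsAsc

variable {n : ℕ} {A B : Matrix (Fin n) (Fin n) ℝ}

lemma trace_mul_le_sum_eigsAsc_mul (hA : A.IsHermitian) (hB : B.IsHermitian) :
    trace (A * B) ≤ ∑ i, eigsAsc hA i * eigsAsc hB i := by
  rw [hA.trace_mul_eq_sum_eigenvalues hB]
  exact sum_mul_mul_le_of_mem_doublyStochastic _ _
    (sum_mul_comp_perm_le_sum_mul_sort hA.eigenvalues hB.eigenvalues)
    (of_sq_mem_doublyStochastic (mul_mem (Unitary.star_mem hA.eigenvectorUnitary.2)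
      hB.eigenvectorUnitary.2))

lemma sum_eigsAsc_sq (hA : A.IsHermitian) : ∑ i, eigsAsc hA i ^ 2 = trace (A * A) := by
  rw [hA.trace_mul_self_eq_sum_eigenvalues_sq]
  exact Equiv.sum_comp (Tuple.sort hA.eigenvalues) (fun i => hA.eigenvalues i ^ 2)

end EigsAsc

/-- Hoffman–Wielandt-type bound: for real symmetric matrices `A`, `B`,
`‖λ(A) − λ(B)‖₂ ≤ ‖A − B‖_F` with ascending eigenvalue vectors. -/
theorem stmt_6 (n : ℕ) (A B : Matrix (Fin n) (Fin n) ℝ)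
    (hA : A.IsHermitian) (hB : B.IsHermitian) :
    l2norm (fun i => eigsAsc hA i - eigsAsc hB i) ≤ frobNorm (A - B) := by
  refine Real.sqrt_le_sqrt ?_
  have hexpand : trace ((A - B) * (A - B)) = trace (A * A) + trace (B * B) - 2 * trace (A * B) := by
    rw [sub_mul, mul_sub, mul_sub, trace_sub, trace_sub, trace_sub, trace_mul_comm B A]
    ring
  calc ∑ i, (eigsAsc hA i - eigsAsc hB i) ^ 2
      = ∑ i, eigsAsc hA i ^ 2 + ∑ i, eigsAsc hB i ^ 2 - 2 * ∑ i, eigsAsc hA i * eigsAsc hB i := by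
        simp only [sub_sq, sum_add_distrib, sum_sub_distrib, mul_sum, mul_assoc]
        ring
    _ ≤ trace (A * A) + trace (B * B) - 2 * trace (A * B) := by
        rw [sum_eigsAsc_sq, sum_eigsAsc_sq]
        linarith [trace_mul_le_sum_eigsAsc_mul hA hB]
    _ = ∑ i, ∑ j, (A - B) i j ^ 2 := by
        rw [(hA.sub hB).sum_sq_entries_eq_trace_mul_self, hexpand]
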